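/- (Well-definedness of gen up to renaming.) For every ground type τ and every term t with t : τ, any two terms obtained as gen_τ(t) using two different choices of distinct fresh variables are variants of each other, i.e., each is an instance of the other. -/

import Mathlib

/-- First-order terms over countably infinite sets of variables (ℕ)
and function symbols (ℕ). -/
inductive Term : Type where
  | var : ℕ → Term
  | app : ℕ → List Term → Term

namespace Term

/-- Applying a substitution (a mapping from variables to terms) homomorphically. -/
def subst (θ : ℕ → Term) : Term → Term
  | var v => θ v
  | app f ts => app f (ts.attach.map (fun x => x.1.subst θ))
decreasing_by
  have := List.sizeOf_lt_of_mem x.2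
  simp only [Term.app.sizeOf_spec]
  omega

/-- A term is ground if it contains no variables. -/
inductive Ground : Term → Prop where
  | app : ∀ f ts, (∀ t ∈ ts, Ground t) → Ground (app f ts)

/-- The variable `v` occurs in the term. -/
inductive Occurs (v : ℕ) : Term → Prop where
  | var : Occurs v (var v)
  | app : ∀ f ts t, t ∈ ts → Occurs v t → Occurs v (app f ts)

/-- `s` is an instance of `t` if `s = tθ` for some substitution `θ`. -/
def IsInstanceOf (s t : Term) : Prop := ∃ θ : ℕ → Term, t.subst θ = s

/-- Two terms are variants if each is an instance of the other. -/
def Variant (s t : Term) : Prop := s.IsInstanceOf t ∧ t.IsInstanceOf s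

end Term

/-- Types: type variables, the distinguished 0-ary constructors
`static`, `dynamic`, `nonvar`, and other constructors applied to types. -/
inductive Ty : Type where
  | var : ℕ → Ty
  | static : Ty
  | dynamic : Ty
  | nonvar : Ty
  | con : ℕ → List Ty → Ty

namespace Ty

/-- Applying a type substitution. -/
def subst (σ : ℕ → Ty) : Ty → Ty
  | var v => σ v
  | static => static
  | dynamic => dynamic
  | nonvar => nonvar
  | con c args => con c (args.attach.map (fun x => x.1.subst σ))
decreasing_by
  have := List.sizeOf_lt_of_mem x.2
  simp only [Ty.con.sizeOf_spec]
  omega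

/-- A type is ground if it contains no type variables. -/
inductive Ground : Ty → Prop where
  | static : Ground static
  | dynamic : Ground dynamic
  | nonvar : Ground nonvar
  | con : ∀ c args, (∀ τ ∈ args, Ground τ) → Ground (con c args)

/-- All type variables of the type are below `n`. -/
inductive VarsBelow (n : ℕ) : Ty → Prop where
  | var : ∀ v, v < n → VarsBelow n (var v)
  | static : VarsBelow n static
  | dynamic : VarsBelow n dynamic
  | nonvar : VarsBelow n nonvar
  | con : ∀ c args, (∀ τ ∈ args, VarsBelow n τ) → VarsBelow n (con c args)

end Ty

/-- A type definition `c(V₁,…,Vₙ) → f₁(T₁¹,…) ; … ; f_k(T_k¹,…)` for an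
`n`-ary type constructor: the variables are represented by `0,…,arity-1`,
the alternatives are pairs of a function symbol and the list of argument types;
the function symbols are distinct and the argument types only use
variables among `0,…,arity-1`. -/
structure TypeDef where
  arity : ℕ
  alts : List (ℕ × List Ty)
  alts_nonempty : alts ≠ []
  alts_nodup : (alts.map Prod.fst).Nodup
  vars_bound : ∀ p ∈ alts, ∀ τ ∈ p.2, Ty.VarsBelow arity τ

/-- A type system: exactly one type definition for every type constructor
other than `static`, `dynamic` and `nonvar`. -/
structure TypeSystem where
  defs : ℕ → TypeDef

mutual
/-- The type judgement `t : τ` relative to the type system `Γ`. -/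
inductive HasType (Γ : TypeSystem) : Term → Ty → Prop where
  | dyn (t : Term) : HasType Γ t .dynamic
  | stat (t : Term) : t.Ground → HasType Γ t .static
  | nv (f : ℕ) (ts : List Term) : HasType Γ (.app f ts) .nonvar
  | con (c : ℕ) (σ : ℕ → Ty) (f : ℕ) (Ts : List Ty) (ts : List Term)
      (hσ : ∀ v, (σ v).Ground)
      (hmem : (f, Ts) ∈ (Γ.defs c).alts)
      (hargs : HasTypeArgs Γ ts (Ts.map (Ty.subst σ))) :
      HasType Γ (.app f ts) (.con c ((List.range (Γ.defs c).arity).map σ))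

/-- `HasTypeArgs Γ ts τs` : the terms `ts` pointwise have the types `τs`. -/
inductive HasTypeArgs (Γ : TypeSystem) : List Term → List Ty → Prop where
  | nil : HasTypeArgs Γ [] []
  | cons {t τ ts τs} : HasType Γ t τ → HasTypeArgs Γ ts τs →
      HasTypeArgs Γ (t :: ts) (τ :: τs)
end

/-- Atoms `p(t₁,…,tₙ)` over a countably infinite set of predicate symbols (ℕ). -/
structure Atom where
  pred : ℕ
  args : List Term

namespace Atom

/-- Substitutions apply to atoms argumentwise. -/
def subst (θ : ℕ → Term) (A : Atom) : Atom := ⟨A.pred, A.args.map (Term.subst θ)⟩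

/-- `B` is an instance of `A`. -/
def IsInstanceOf (B A : Atom) : Prop := ∃ θ : ℕ → Term, A.subst θ = B

/-- Two atoms are variants if each is an instance of the other. -/
def Variant (A B : Atom) : Prop := A.IsInstanceOf B ∧ B.IsInstanceOf A

end Atom

/-- A division: a set of expressions `p(τ₁,…,τₙ)` (represented as pairs of a
predicate symbol and a list of types), with all types ground and at most one
division per predicate. -/
def IsDivision (Δ : Set (ℕ × List Ty)) : Prop :=
  (∀ d ∈ Δ, ∀ τ ∈ d.2, τ.Ground) ∧
  (∀ d ∈ Δ, ∀ d' ∈ Δ, d.1 = d'.1 → d = d')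

/-- An atom `p(t₁,…,tₙ)` is safe wrt `Δ` iff there is `p(τ₁,…,τₙ) ∈ Δ`
with `tᵢ : τᵢ` for all `i`. -/
def SafeAtom (Γ : TypeSystem) (Δ : Set (ℕ × List Ty)) (A : Atom) : Prop :=
  ∃ τs : List Ty, (A.pred, τs) ∈ Δ ∧ HasTypeArgs Γ A.args τs

mutual
/-- `Gen Γ τ t s L`: `s` is a result of the partial generalisation mapping
`gen_τ(t)`, where `L` records (in order) the fresh variables chosen. -/
inductive Gen (Γ : TypeSystem) : Ty → Term → Term → List ℕ → Prop where
  | static (t : Term) : Gen Γ .static t t []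
  | dynamic (t : Term) (v : ℕ) : Gen Γ .dynamic t (.var v) [v]
  | nonvar (f : ℕ) (ts : List Term) (vs : List ℕ) (h : vs.length = ts.length) :
      Gen Γ .nonvar (.app f ts) (.app f (vs.map Term.var)) vs
  | con (c : ℕ) (σ : ℕ → Ty) (f : ℕ) (Ts : List Ty) (ts ss : List Term) (L : List ℕ)
      (hσ : ∀ v, (σ v).Ground)
      (hmem : (f, Ts) ∈ (Γ.defs c).alts)
      (hargs : GenArgs Γ (Ts.map (Ty.subst σ)) ts ss L) :
      Gen Γ (.con c ((List.range (Γ.defs c).arity).map σ)) (.app f ts) (.app f ss) L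

/-- Pointwise generalisation of a list of terms, collecting the fresh variables. -/
inductive GenArgs (Γ : TypeSystem) : List Ty → List Term → List Term → List ℕ → Prop where
  | nil : GenArgs Γ [] [] [] []
  | cons {τ t s L τs ts ss Ls} : Gen Γ τ t s L → GenArgs Γ τs ts ss Ls →
      GenArgs Γ (τ :: τs) (t :: ts) (s :: ss) (L ++ Ls)
end

/-- `GenAtom Γ Δ A B L`: `B` is a result of `gen_Δ(A)` with fresh variables `L`. -/
def GenAtom (Γ : TypeSystem) (Δ : Set (ℕ × List Ty)) (A B : Atom) (L : List ℕ) : Prop :=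
  B.pred = A.pred ∧
  ∃ τs : List Ty, (A.pred, τs) ∈ Δ ∧ HasTypeArgs Γ A.args τs ∧
    GenArgs Γ τs A.args B.args L

/-! Two runs of `gen_τ(t)` build the same skeleton and differ only in the fresh variables they
pick, at the same positions: since the function symbols of a type definition are distinct and the
argument types of an alternative only involve the parameters of the constructor, the type and the
outermost symbol of `t` determine the argument types uniquely. Hence the substitution sending the
`i`-th fresh variable of one run to the `i`-th fresh variable of the other, and fixing every other
variable, maps the first result to the second; it fixes `t` because no fresh variable occurs in
`t`. -/

theorem List.Nodup.exists_map_eq {α β : Type*} {L : List α} (hnd : L.Nodup) {l : List β}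
    (hlen : l.length = L.length) (g : α → β) :
    ∃ θ : α → β, L.map θ = l ∧ ∀ v ∉ L, θ v = g v := by
  classical
  refine ⟨fun v => if h : v ∈ L then l[L.idxOf v]'(hlen ▸ List.idxOf_lt_length_iff.2 h) else g v,
    ?_, fun v hv => dif_neg hv⟩
  refine List.ext_getElem (by simp [hlen]) fun i hi _ => ?_
  simp [hnd.idxOf_getElem]

namespace Term

theorem subst_app (θ : ℕ → Term) (f : ℕ) (ts : List Term) :
    (app f ts).subst θ = app f (ts.map (subst θ)) := by
  rw [subst, List.map_attach_eq_pmap, List.pmap_eq_map]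

theorem subst_var (θ : ℕ → Term) (v : ℕ) : (var v).subst θ = θ v := by
  rw [subst]

theorem subst_comp_var (θ : ℕ → Term) : subst θ ∘ var = θ :=
  funext (subst_var θ)

theorem subst_congr {θ₁ θ₂ : ℕ → Term} :
    ∀ t : Term, (∀ v, Occurs v t → θ₁ v = θ₂ v) → t.subst θ₁ = t.subst θ₂
  | var v, h => by rw [subst_var, subst_var]; exact h v .var
  | app f ts, h => by
    rw [subst_app, subst_app]
    exact congrArg (app f) <| List.map_congr_left fun t ht =>
      subst_congr t fun v hv => h v (.app f ts t ht hv)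

theorem subst_id : ∀ t : Term, t.subst var = t
  | var v => subst_var var v
  | app f ts => by
    rw [subst_app]
    exact congrArg (app f) <| (List.map_congr_left fun t _ => subst_id t).trans
      (List.map_id ts)

theorem subst_eq_self {θ : ℕ → Term} {t : Term} (h : ∀ v, Occurs v t → θ v = var v) :
    t.subst θ = t :=
  (subst_congr t h).trans (subst_id t)

end Term

namespace Ty

theorem subst_con (σ : ℕ → Ty) (c : ℕ) (args : List Ty) :
    (con c args).subst σ = con c (args.map (subst σ)) := by
  rw [subst, List.map_attach_eq_pmap, List.pmap_eq_map]

theorem subst_congr_of_varsBelow {σ₁ σ₂ : ℕ → Ty} {n : ℕ} (hσ : ∀ v < n, σ₁ v = σ₂ v) :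
    ∀ τ : Ty, VarsBelow n τ → τ.subst σ₁ = τ.subst σ₂
  | var v, .var _ hv => by rw [subst, subst]; exact hσ v hv
  | static, _ => by rw [subst, subst]
  | dynamic, _ => by rw [subst, subst]
  | nonvar, _ => by rw [subst, subst]
  | con c args, .con _ _ h => by
    rw [subst_con, subst_con]
    exact congrArg (con c) <| List.map_congr_left fun τ hτ =>
      subst_congr_of_varsBelow hσ τ (h τ hτ)

end Ty

theorem TypeDef.eq_of_mem_alts (D : TypeDef) {f : ℕ} {Ts Ts' : List Ty}
    (h : (f, Ts) ∈ D.alts) (h' : (f, Ts') ∈ D.alts) : Ts = Ts' :=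
  congrArg Prod.snd (List.inj_on_of_nodup_map D.alts_nodup h h' rfl)

section Gen

variable {Γ : TypeSystem}

theorem Gen.con_inv {c f : ℕ} {σ : ℕ → Ty} {Ts : List Ty} {ts : List Term}
    {s : Term} {L : List ℕ} (hmem : (f, Ts) ∈ (Γ.defs c).alts)
    (h : Gen Γ (.con c ((List.range (Γ.defs c).arity).map σ)) (.app f ts) s L) :
    ∃ ss, s = .app f ss ∧ GenArgs Γ (Ts.map (Ty.subst σ)) ts ss L := by
  generalize hτ : Ty.con c _ = τ at h
  cases h
  case con σ' Ts' ss _ hmem' hargs =>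
    obtain ⟨rfl, hσ⟩ := Ty.con.inj hτ
    obtain rfl := (Γ.defs c).eq_of_mem_alts hmem' hmem
    refine ⟨ss, rfl, ?_⟩
    have hσσ' : ∀ v < (Γ.defs c).arity, σ' v = σ v := fun v hv => by
      have := List.getElem_of_eq hσ (i := v) (by simpa using hv)
      simp only [List.getElem_map, List.getElem_range] at this
      exact this.symm
    rwa [List.map_congr_left fun τ hτ =>
      Ty.subst_congr_of_varsBelow hσσ' τ ((Γ.defs c).vars_bound _ hmem' τ hτ)] at hargs
  all_goals cases hτ

mutual

theorem Gen.length_eq {τ : Ty} {t s₁ s₂ : Term} {L₁ L₂ : List ℕ} :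
    Gen Γ τ t s₁ L₁ → Gen Γ τ t s₂ L₂ → L₁.length = L₂.length
  | .static _, .static _ => rfl
  | .dynamic _ _, .dynamic _ _ => rfl
  | .nonvar _ _ _ h, .nonvar _ _ _ h' => h.trans h'.symm
  | .con _ _ _ _ _ _ _ _ hmem hargs, h₂ => by
    obtain ⟨_, rfl, hargs₂⟩ := Gen.con_inv hmem h₂
    exact hargs.length_eq hargs₂

theorem GenArgs.length_eq {τs : List Ty} {ts ss₁ ss₂ : List Term} {L₁ L₂ : List ℕ} :
    GenArgs Γ τs ts ss₁ L₁ → GenArgs Γ τs ts ss₂ L₂ → L₁.length = L₂.length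
  | .nil, .nil => rfl
  | .cons h hs, .cons h' hs' => by
    rw [List.length_append, List.length_append, h.length_eq h', hs.length_eq hs']

end

mutual

theorem Gen.subst_eq {τ : Ty} {t s₁ s₂ : Term} {L₁ L₂ : List ℕ} {θ : ℕ → Term}
    (hL : L₁.map θ = L₂.map Term.var) (hfix : ∀ v, Term.Occurs v t → θ v = Term.var v) :
    Gen Γ τ t s₁ L₁ → Gen Γ τ t s₂ L₂ → s₁.subst θ = s₂
  | .static _, .static _ => Term.subst_eq_self hfix
  | .dynamic _ _, .dynamic _ _ => by
    simpa [Term.subst_var] using hL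
  | .nonvar _ _ _ _, .nonvar _ _ _ _ => by
    rw [Term.subst_app, List.map_map, Term.subst_comp_var, hL]
  | .con _ _ _ _ _ _ _ _ hmem hargs, h₂ => by
    obtain ⟨_, rfl, hargs₂⟩ := Gen.con_inv hmem h₂
    rw [Term.subst_app, hargs.map_subst_eq hL (fun v t ht hv => hfix v (.app _ _ t ht hv)) hargs₂]

theorem GenArgs.map_subst_eq {τs : List Ty} {ts ss₁ ss₂ : List Term} {L₁ L₂ : List ℕ}
    {θ : ℕ → Term} (hL : L₁.map θ = L₂.map Term.var)
    (hfix : ∀ v, ∀ t ∈ ts, Term.Occurs v t → θ v = Term.var v) :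
    GenArgs Γ τs ts ss₁ L₁ → GenArgs Γ τs ts ss₂ L₂ → ss₁.map (Term.subst θ) = ss₂
  | .nil, .nil => rfl
  | .cons h hs, .cons h' hs' => by
    rw [List.map_append, List.map_append] at hL
    obtain ⟨hL_head, hL_tail⟩ := List.append_inj hL (by simpa using h.length_eq h')
    rw [List.map_cons, h.subst_eq hL_head (fun v hv => hfix v _ List.mem_cons_self hv) h',
      hs.map_subst_eq hL_tail (fun v t ht hv => hfix v t (List.mem_cons_of_mem _ ht) hv) hs']

end

theorem Gen.isInstanceOf {τ : Ty} {t s₁ s₂ : Term} {L₁ L₂ : List ℕ}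
    (h₁ : Gen Γ τ t s₁ L₁) (hnd₁ : L₁.Nodup) (hf₁ : ∀ v ∈ L₁, ¬ Term.Occurs v t)
    (h₂ : Gen Γ τ t s₂ L₂) : s₂.IsInstanceOf s₁ := by
  obtain ⟨θ, hL, hθ⟩ := hnd₁.exists_map_eq (l := L₂.map Term.var)
    (by simpa using (h₁.length_eq h₂).symm) Term.var
  exact ⟨θ, h₁.subst_eq hL (fun v hv => hθ v fun hv₁ => hf₁ v hv₁ hv) h₂⟩

end Gen

/-- **Well-definedness of gen up to renaming.** For every ground type `τ` and
every term `t` with `t : τ`, any two terms obtained as `gen_τ(t)` using two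
different choices of distinct fresh variables are variants of each other. -/
theorem gen_variant (Γ : TypeSystem) (τ : Ty) (t : Term) (hτ : τ.Ground)
    (ht : HasType Γ t τ) (s₁ s₂ : Term) (L₁ L₂ : List ℕ)
    (h₁ : Gen Γ τ t s₁ L₁) (hnd₁ : L₁.Nodup) (hf₁ : ∀ v ∈ L₁, ¬ Term.Occurs v t)
    (h₂ : Gen Γ τ t s₂ L₂) (hnd₂ : L₂.Nodup) (hf₂ : ∀ v ∈ L₂, ¬ Term.Occurs v t) :
    Term.Variant s₁ s₂ :=
  ⟨h₂.isInstanceOf hnd₂ hf₂ h₁, h₁.isInstanceOf hnd₁ hf₁ h₂⟩
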